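/- arXiv:2401.07587 — 5 statements merged into one kernel-verified Lean document; each statement's English description precedes it below -/
import Mathlib

section
/- Let u_0, v_0 ∈ ℝ^p and let R_{u_0} be an orthogonal p×p matrix such that R_{u_0} applied to the vector (|u_0|, 0, …, 0) equals u_0. Then there exists an orthogonal matrix R_{v_0} with R_{v_0}(|v_0|, 0, …, 0) = v_0 and such that the operator norm ‖|u_0| R_{u_0} − |v_0| R_{v_0}‖ ≤ |u_0 − v_0|. -/
/-!
Write `u₀ = ‖u₀‖ x` and `v₀ = ‖v₀‖ y` with unit vectors `x = Ru e₀` and `y`, and take `Rv = S Ru`,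
where `S` rotates the plane spanned by `x` and `y`, carrying `x` to `y`, and fixes its orthogonal
complement. Then `‖‖u₀‖ Ru - ‖v₀‖ Rv‖ = ‖‖u₀‖ - ‖v₀‖ S‖`, and the Gram inequality for `x, y, z`
gives `⟪z, S z⟫ ≥ ⟪x, y⟫ ‖z‖²`, whence
`‖‖u₀‖ z - ‖v₀‖ S z‖² ≤ (‖u₀‖² - 2 ‖u₀‖ ‖v₀‖ ⟪x, y⟫ + ‖v₀‖²) ‖z‖² = ‖u₀ - v₀‖² ‖z‖²`.
-/

open scoped RealInnerProductSpace

section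

variable {E : Type*} [NormedAddCommGroup E] [InnerProductSpace ℝ E]

theorem sq_inner_sub_two_mul_inner_add_sq_inner_le {x y : E} (hx : ‖x‖ = 1) (hy : ‖y‖ = 1)
    (z : E) :
    ⟪x, z⟫ ^ 2 - 2 * ⟪x, y⟫ * ⟪x, z⟫ * ⟪y, z⟫ + ⟪y, z⟫ ^ 2 ≤ (1 - ⟪x, y⟫ ^ 2) * ‖z‖ ^ 2 := by
  have hcs := real_inner_mul_inner_self_le (y - ⟪x, y⟫ • x) (z - ⟪x, z⟫ • x)
  have hxx : ⟪x, x⟫ = 1 := by rw [real_inner_self_eq_norm_sq, hx, one_pow]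
  have hyy : ⟪y, y⟫ = 1 := by rw [real_inner_self_eq_norm_sq, hy, one_pow]
  simp only [inner_sub_left, inner_sub_right, real_inner_smul_left, real_inner_smul_right,
    hxx, hyy, real_inner_self_eq_norm_sq z, real_inner_comm x] at hcs
  nlinarith [hcs]

theorem Submodule.reflection_orthogonalComplement_singleton_apply (w z : E) :
    (ℝ ∙ w)ᗮ.reflection z = z - (2 * ⟪w, z⟫ / ‖w‖ ^ 2) • w := by
  rw [reflection_orthogonal_apply, reflection_singleton_apply, ← ofNat_smul_eq_nsmul ℝ, smul_smul,
    mul_div_assoc]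
  simp

/-- The product of the reflections in `(x + y)ᗮ` and `yᗮ`; for unit vectors with `x ≠ -y`, the
rotation of `span {x, y}` taking `x` to `y`, fixing the orthogonal complement. -/
noncomputable def planeRotation (x y : E) : E ≃ₗᵢ[ℝ] E :=
  (ℝ ∙ (x + y))ᗮ.reflection.trans (ℝ ∙ y)ᗮ.reflection

theorem planeRotation_apply_self {x y : E} (h : ‖x‖ = ‖y‖) : planeRotation x y x = y := by
  have hρ : (ℝ ∙ (x - -y))ᗮ.reflection x = -y := Submodule.reflection_sub (by rwa [norm_neg])
  rw [sub_neg_eq_add] at hρ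
  simp [planeRotation, hρ, Submodule.reflection_orthogonalComplement_singleton_eq_neg]

theorem inner_planeRotation_self {x y : E} (hx : ‖x‖ = 1) (hy : ‖y‖ = 1) (hc : 1 + ⟪x, y⟫ ≠ 0)
    (z : E) :
    ⟪z, planeRotation x y z⟫ =
      ‖z‖ ^ 2 - (⟪x, z⟫ + ⟪y, z⟫) ^ 2 / (1 + ⟪x, y⟫) + 2 * ⟪x, z⟫ * ⟪y, z⟫ := by
  have hw : ‖x + y‖ ^ 2 = 2 * (1 + ⟪x, y⟫) := by
    rw [norm_add_sq_real, hx, hy]; ring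
  simp only [planeRotation, LinearIsometryEquiv.trans_apply,
    Submodule.reflection_orthogonalComplement_singleton_apply, hw, inner_sub_right,
    inner_add_right, real_inner_smul_right, real_inner_self_eq_norm_sq, hy, real_inner_comm x y,
    real_inner_comm z]
  field_simp
  ring

theorem inner_mul_norm_sq_le_inner_planeRotation_self {x y : E} (hx : ‖x‖ = 1) (hy : ‖y‖ = 1)
    (z : E) : ⟪x, y⟫ * ‖z‖ ^ 2 ≤ ⟪z, planeRotation x y z⟫ := by
  rcases le_or_gt (1 + ⟪x, y⟫) 0 with hc | hc
  · have hcs := neg_le_of_abs_le (abs_real_inner_le_norm z (planeRotation x y z))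
    rw [LinearIsometryEquiv.norm_map] at hcs
    nlinarith [sq_nonneg ‖z‖]
  · have hgram := sq_inner_sub_two_mul_inner_add_sq_inner_le hx hy z
    have hquot : (⟪x, z⟫ + ⟪y, z⟫) ^ 2 / (1 + ⟪x, y⟫)
        ≤ 2 * ⟪x, z⟫ * ⟪y, z⟫ + (1 - ⟪x, y⟫) * ‖z‖ ^ 2 := by
      rw [div_le_iff₀ hc]; nlinarith
    rw [inner_planeRotation_self hx hy hc.ne']
    linarith

theorem norm_smul_sub_smul_planeRotation_le {x y : E} (hx : ‖x‖ = 1) (hy : ‖y‖ = 1) {a b : ℝ}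
    (hab : 0 ≤ a * b) (z : E) :
    ‖a • z - b • planeRotation x y z‖ ≤ ‖a • x - b • y‖ * ‖z‖ := by
  have hinner := mul_le_mul_of_nonneg_left
    (inner_mul_norm_sq_le_inner_planeRotation_self hx hy z) hab
  refine le_of_pow_le_pow_left₀ two_ne_zero (by positivity) ?_
  rw [mul_pow, norm_sub_sq_real, norm_sub_sq_real, norm_smul, norm_smul, norm_smul, norm_smul,
    LinearIsometryEquiv.norm_map, hx, hy, real_inner_smul_left, real_inner_smul_left,
    real_inner_smul_right, real_inner_smul_right]
  simp only [Real.norm_eq_abs, mul_pow, sq_abs]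
  nlinarith

theorem exists_norm_eq_one_and_norm_smul_eq {x : E} (hx : ‖x‖ = 1) (v : E) :
    ∃ y : E, ‖y‖ = 1 ∧ ‖v‖ • y = v := by
  rcases eq_or_ne v 0 with rfl | hv
  · exact ⟨x, hx, by rw [norm_zero, zero_smul]⟩
  · exact ⟨‖v‖⁻¹ • v, norm_smul_inv_norm hv, by
      rw [smul_smul, mul_inv_cancel₀ (norm_ne_zero_iff.mpr hv), one_smul]⟩

end

/-- For `u₀ v₀ : ℝ^p` and an orthogonal matrix `Ru` sending `(|u₀|,0,…,0)` to `u₀`,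
there is an orthogonal matrix `Rv` sending `(|v₀|,0,…,0)` to `v₀` with
`‖|u₀|Ru − |v₀|Rv‖ ≤ |u₀ − v₀|` in operator norm. -/
theorem stmt0 (p : ℕ) (hp : 0 < p)
    (u₀ v₀ : EuclideanSpace ℝ (Fin p))
    (Ru : Matrix (Fin p) (Fin p) ℝ)
    (hRuO : Ru ∈ Matrix.orthogonalGroup (Fin p) ℝ)
    (hRu0 : Matrix.toEuclideanCLM (𝕜 := ℝ) Ru (EuclideanSpace.single ⟨0, hp⟩ ‖u₀‖) = u₀) :
    ∃ Rv : Matrix (Fin p) (Fin p) ℝ,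
      Rv ∈ Matrix.orthogonalGroup (Fin p) ℝ ∧
      Matrix.toEuclideanCLM (𝕜 := ℝ) Rv (EuclideanSpace.single ⟨0, hp⟩ ‖v₀‖) = v₀ ∧
      ‖‖u₀‖ • Matrix.toEuclideanCLM (𝕜 := ℝ) Ru
        - ‖v₀‖ • Matrix.toEuclideanCLM (𝕜 := ℝ) Rv‖ ≤ ‖u₀ - v₀‖ := by
  set T := Matrix.toEuclideanCLM (𝕜 := ℝ) (n := Fin p)
  set e₀ : EuclideanSpace ℝ (Fin p) := EuclideanSpace.single ⟨0, hp⟩ 1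
  have hsingle (r : ℝ) : EuclideanSpace.single ⟨0, hp⟩ r = r • e₀ := by
    ext i; simp [e₀]
  let U := Unitary.linearIsometryEquiv ⟨T Ru, Unitary.map_mem T hRuO⟩
  have hx : ‖U e₀‖ = 1 := by simp [e₀]
  have hu : ‖u₀‖ • U e₀ = u₀ := by rwa [hsingle, map_smul] at hRu0
  obtain ⟨y, hy, hv⟩ := exists_norm_eq_one_and_norm_smul_eq hx v₀
  let V := U.trans (planeRotation (U e₀) y)
  refine ⟨T.symm V, Unitary.map_mem T.symm (Unitary.linearIsometryEquiv.symm V).2, ?_, ?_⟩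
  · simp [V, hsingle, planeRotation_apply_self (hx.trans hy.symm), hv]
  · rw [StarAlgEquiv.apply_symm_apply]
    refine ContinuousLinearMap.opNorm_le_bound _ (norm_nonneg _) fun z => ?_
    have := norm_smul_sub_smul_planeRotation_le hx hy
      (mul_nonneg (norm_nonneg u₀) (norm_nonneg v₀)) (U z)
    rwa [hu, hv, U.norm_map] at this
end

section
/- Let K ⊂ ℝ^n × ℝ^n be a nonempty compact set, Π a topological space, F : ℝ^n × Π → ℝ^m continuous, and for π ∈ Π write F_π = F(·, π). For η ≥ 0 let D_η = {(x_a, x_b) : |x_a − x_b| ≤ η}. Then there exists a continuous function ρ₁ : Π × ℝ₊ → ℝ₊ such that |F_π(x_a) − F_π(x_b)| ≥ ρ₁(π, η)|x_a − x_b| for all (x_a, x_b) ∈ K \ interior(D_η) and all π ∈ Π; moreover, if for some π the map (x_a,x_b) ↦ F_π(x_a) − F_π(x_b) never vanishes on K \ interior(D_η), then ρ₁(π, η) > 0. -/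
/-!
Adding to `‖F_π x_a - F_π x_b‖` the penalty `max 0 (η - ‖x_a - x_b‖)` gives a function of
`(π, η, x)` that is jointly continuous, agrees with `‖F_π x_a - F_π x_b‖` off the open
`η`-neighbourhood of the diagonal and is positive on it. Its infimum over the compact set `K`
is therefore continuous in `(π, η)`, and positive as soon as `F_π` separates every pair of `K`
at distance at least `η`. Dividing by a bound `d` for `‖x_a - x_b‖` on `K` turns it into a
lower Lipschitz constant.
-/

open Set Metric

theorem isOpenMap_fst_sub_snd {G : Type*} [AddGroup G] [TopologicalSpace G]
    [IsTopologicalAddGroup G] : IsOpenMap fun q : G × G => q.1 - q.2 :=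
  IsOpenMap.of_sections fun q =>
    ⟨fun y => (y + q.2, q.2), by fun_prop, by simp, fun y => by simp⟩

theorem interior_setOf_norm_sub_le {E : Type*} [NormedAddCommGroup E] [NormedSpace ℝ E]
    [Nontrivial E] (η : ℝ) :
    interior {q : E × E | ‖q.1 - q.2‖ ≤ η} = {q | ‖q.1 - q.2‖ < η} := by
  have hsub : Continuous fun q : E × E => q.1 - q.2 := continuous_fst.sub continuous_snd
  calc interior {q : E × E | ‖q.1 - q.2‖ ≤ η}
      = interior ((fun q : E × E => q.1 - q.2) ⁻¹' closedBall 0 η) := by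
        congr 1; ext; simp
    _ = (fun q : E × E => q.1 - q.2) ⁻¹' ball 0 η := by
      rw [← isOpenMap_fst_sub_snd.preimage_interior_eq_interior_preimage hsub,
        interior_closedBall']
    _ = {q | ‖q.1 - q.2‖ < η} := by ext; simp

theorem mem_diff_interior_setOf_norm_sub_le_iff {E : Type*} [NormedAddCommGroup E]
    [NormedSpace ℝ E] [Nontrivial E] {K : Set (E × E)} {η : ℝ} {x : E × E} :
    x ∈ K \ interior {q : E × E | ‖q.1 - q.2‖ ≤ η} ↔ x ∈ K ∧ η ≤ ‖x.1 - x.2‖ := by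
  simp [interior_setOf_norm_sub_le]

theorem interior_setOf_norm_sub_le_of_subsingleton {E : Type*} [SeminormedAddGroup E]
    [Subsingleton E] {η : ℝ} (hη : 0 ≤ η) :
    interior {q : E × E | ‖q.1 - q.2‖ ≤ η} = univ := by
  simp [Subsingleton.elim _ (0 : E), hη]

section LowerLipschitz

variable {E G P : Type*} [SeminormedAddCommGroup E] [NormedAddCommGroup G]

def penalizedSeparation (f : E → P → G) (p : P × ℝ) (x : E × E) : ℝ :=
  ‖f x.1 p.1 - f x.2 p.1‖ + max 0 (p.2 - ‖x.1 - x.2‖)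

theorem continuous_penalizedSeparation [TopologicalSpace P] {f : E → P → G}
    (hf : Continuous fun q : E × P => f q.1 q.2) :
    Continuous fun z : (P × ℝ) × (E × E) => penalizedSeparation f z.1 z.2 := by
  have hf₁ : Continuous fun z : (P × ℝ) × (E × E) => f z.2.1 z.1.1 :=
    hf.comp (continuous_snd.fst.prodMk continuous_fst.fst)
  have hf₂ : Continuous fun z : (P × ℝ) × (E × E) => f z.2.2 z.1.1 :=
    hf.comp (continuous_snd.snd.prodMk continuous_fst.fst)
  unfold penalizedSeparation
  fun_prop

theorem penalizedSeparation_nonneg (f : E → P → G) (p : P × ℝ) (x : E × E) :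
    0 ≤ penalizedSeparation f p x :=
  add_nonneg (norm_nonneg _) (le_max_left _ _)

theorem penalizedSeparation_of_le {f : E → P → G} {p : P × ℝ} {x : E × E}
    (h : p.2 ≤ ‖x.1 - x.2‖) : penalizedSeparation f p x = ‖f x.1 p.1 - f x.2 p.1‖ := by
  simp [penalizedSeparation, h]

theorem penalizedSeparation_pos {f : E → P → G} {p : P × ℝ} {x : E × E}
    (h : p.2 ≤ ‖x.1 - x.2‖ → f x.1 p.1 ≠ f x.2 p.1) : 0 < penalizedSeparation f p x := by
  rcases lt_or_ge ‖x.1 - x.2‖ p.2 with hlt | hle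
  · exact add_pos_of_nonneg_of_pos (norm_nonneg _) (lt_max_of_lt_right (sub_pos.2 hlt))
  · rw [penalizedSeparation_of_le hle]
    exact norm_pos_iff.2 (sub_ne_zero.2 (h hle))

noncomputable def lowerLipschitzBound (K : Set (E × E)) (f : E → P → G) (d : ℝ)
    (p : P × ℝ) : ℝ :=
  sInf (penalizedSeparation f p '' K) / d

variable {K : Set (E × E)} {f : E → P → G} {d : ℝ}

theorem continuous_lowerLipschitzBound [TopologicalSpace P] (hK : IsCompact K)
    (hf : Continuous fun q : E × P => f q.1 q.2) :
    Continuous (lowerLipschitzBound K f d) :=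
  (hK.continuous_sInf (continuous_penalizedSeparation hf)).div_const d

theorem sInf_penalizedSeparation_nonneg (p : P × ℝ) :
    0 ≤ sInf (penalizedSeparation f p '' K) :=
  Real.sInf_nonneg <| forall_mem_image.2 fun x _ => penalizedSeparation_nonneg f p x

theorem lowerLipschitzBound_nonneg (hd : 0 ≤ d) (p : P × ℝ) : 0 ≤ lowerLipschitzBound K f d p :=
  div_nonneg (sInf_penalizedSeparation_nonneg p) hd

theorem lowerLipschitzBound_mul_le (hd : ∀ x ∈ K, ‖x.1 - x.2‖ ≤ d) {p : P × ℝ} {x : E × E}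
    (hx : x ∈ K) (hη : p.2 ≤ ‖x.1 - x.2‖) :
    lowerLipschitzBound K f d p * ‖x.1 - x.2‖ ≤ ‖f x.1 p.1 - f x.2 p.1‖ := by
  have hbdd : BddBelow (penalizedSeparation f p '' K) :=
    ⟨0, forall_mem_image.2 fun x _ => penalizedSeparation_nonneg f p x⟩
  have hinf : sInf (penalizedSeparation f p '' K) ≤ ‖f x.1 p.1 - f x.2 p.1‖ :=
    penalizedSeparation_of_le (f := f) hη ▸ csInf_le hbdd (mem_image_of_mem _ hx)
  calc lowerLipschitzBound K f d p * ‖x.1 - x.2‖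
      = sInf (penalizedSeparation f p '' K) * (‖x.1 - x.2‖ / d) := by
        rw [lowerLipschitzBound, div_mul_eq_mul_div, mul_div_assoc]
    _ ≤ sInf (penalizedSeparation f p '' K) * 1 := by
        gcongr
        · exact sInf_penalizedSeparation_nonneg p
        · exact div_le_one_of_le₀ (hd x hx) ((norm_nonneg _).trans (hd x hx))
    _ ≤ ‖f x.1 p.1 - f x.2 p.1‖ := by rwa [mul_one]

theorem lowerLipschitzBound_pos [TopologicalSpace P] (hK : IsCompact K) (hKne : K.Nonempty)
    (hf : Continuous fun q : E × P => f q.1 q.2) (hd : 0 < d) {p : P × ℝ}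
    (hsep : ∀ x ∈ K, p.2 ≤ ‖x.1 - x.2‖ → f x.1 p.1 ≠ f x.2 p.1) :
    0 < lowerLipschitzBound K f d p := by
  have hcont : Continuous (penalizedSeparation f p) :=
    (continuous_penalizedSeparation hf).comp (Continuous.prodMk_right p)
  obtain ⟨x, hx, hmin⟩ := (hK.image hcont).sInf_mem (hKne.image _)
  rw [lowerLipschitzBound, ← hmin]
  exact div_pos (penalizedSeparation_pos (hsep x hx)) hd

end LowerLipschitz

/-- Away-from-diagonal lower Lipschitz estimate with continuous parameter-dependent constant. -/
theorem stmt2 (n m : ℕ) (P : Type*) [TopologicalSpace P]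
    (K : Set (EuclideanSpace ℝ (Fin n) × EuclideanSpace ℝ (Fin n)))
    (hK : IsCompact K) (hKne : K.Nonempty)
    (F : EuclideanSpace ℝ (Fin n) → P → EuclideanSpace ℝ (Fin m))
    (hF : Continuous fun q : EuclideanSpace ℝ (Fin n) × P => F q.1 q.2) :
    ∃ ρ₁ : P × ℝ → ℝ, Continuous ρ₁ ∧ (∀ q, 0 ≤ ρ₁ q) ∧
      (∀ (π : P) (η : ℝ), 0 ≤ η →
        ∀ x ∈ K \ interior {q : EuclideanSpace ℝ (Fin n) × EuclideanSpace ℝ (Fin n) |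
            ‖q.1 - q.2‖ ≤ η},
          ρ₁ (π, η) * ‖x.1 - x.2‖ ≤ ‖F x.1 π - F x.2 π‖) ∧
      (∀ (π : P) (η : ℝ), 0 ≤ η →
        (∀ x ∈ K \ interior {q : EuclideanSpace ℝ (Fin n) × EuclideanSpace ℝ (Fin n) |
            ‖q.1 - q.2‖ ≤ η}, F x.1 π - F x.2 π ≠ 0) →
        0 < ρ₁ (π, η)) := by
  rcases subsingleton_or_nontrivial (EuclideanSpace ℝ (Fin n)) with _ | _
  · refine ⟨fun _ => 1, continuous_const, fun _ => zero_le_one, ?_, fun _ _ _ _ => one_pos⟩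
    intro π η hη x hx
    exact (hx.2 (by rw [interior_setOf_norm_sub_le_of_subsingleton hη]; trivial)).elim
  obtain ⟨C, hC⟩ := hK.bddAbove_image (continuous_fst.sub continuous_snd).norm.continuousOn
  have hd : ∀ x ∈ K, ‖x.1 - x.2‖ ≤ max C 1 := fun x hx =>
    (hC (mem_image_of_mem _ hx)).trans (le_max_left C 1)
  have hd0 : 0 < max C 1 := lt_max_of_lt_right one_pos
  refine ⟨lowerLipschitzBound K F (max C 1), continuous_lowerLipschitzBound hK hF,
    lowerLipschitzBound_nonneg hd0.le, ?_, ?_⟩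
  · intro π η _ x hx
    rw [mem_diff_interior_setOf_norm_sub_le_iff] at hx
    exact lowerLipschitzBound_mul_le hd hx.1 hx.2
  · intro π η _ hsep
    exact lowerLipschitzBound_pos hK hKne hF hd0 fun x hx hη =>
      sub_ne_zero.1 (hsep x (mem_diff_interior_setOf_norm_sub_le_iff.2 ⟨hx, hη⟩))
end

section
/- Let 𝒦 ⊂ ℝ^n be compact, Π a compact topological space, and F : ℝ^n × Π → ℝ^m continuous with (x,π) ↦ ∂F/∂x(x,π) continuous, such that for each π ∈ Π the map F_π = F(·,π) is an injective immersion on 𝒦 (F_π injective on 𝒦 and its differential injective at each point of 𝒦). Then there exists ρ > 0 such that |F_π(x_a) − F_π(x_b)| ≥ ρ |x_a − x_b| for all x_a, x_b ∈ 𝒦 and all π ∈ Π. -/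
/-!
Compactness of `𝒦 × 𝒦 × P` reduces the claim to a local one: every point `(a, b, π)` needs a
neighbourhood on which `ρ ‖xa - xb‖ ≤ ‖F xa π - F xb π‖` holds for all small `ρ`. Off the
diagonal this follows from injectivity and continuity. On the diagonal the derivative at
nearby points and parameters stays within `c/2` of the injective `DF_π(a)`, which is bounded
below by some `c`, so the mean value inequality gives the bound `c/2` on a small ball.
-/

open Filter Function Metric Set Topology

theorem ContinuousLinearMap.exists_pos_mul_norm_le_of_injective {E F : Type*}
    [NormedAddCommGroup E] [NormedSpace ℝ E] [FiniteDimensional ℝ E]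
    [NormedAddCommGroup F] [NormedSpace ℝ F] {L : E →L[ℝ] F} (hL : Injective L) :
    ∃ c > 0, ∀ u, c * ‖u‖ ≤ ‖L u‖ := by
  obtain ⟨K, hK, hKL⟩ := (L : E →ₗ[ℝ] F).injective_iff_antilipschitz.1 hL
  refine ⟨(K : ℝ)⁻¹, by positivity, fun u => ?_⟩
  rw [inv_mul_le_iff₀ (by exact_mod_cast hK)]
  exact L.bound_of_antilipschitz hKL u

theorem Convex.sub_mul_norm_sub_le_of_norm_fderiv_sub_le {E F : Type*}
    [NormedAddCommGroup E] [NormedSpace ℝ E] [NormedAddCommGroup F] [NormedSpace ℝ F]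
    {s : Set E} (hs : Convex ℝ s) {g : E → F} (hg : ∀ z ∈ s, DifferentiableAt ℝ g z)
    {L : E →L[ℝ] F} {c ε : ℝ} (hL : ∀ u, c * ‖u‖ ≤ ‖L u‖)
    (hε : ∀ z ∈ s, ‖fderiv ℝ g z - L‖ ≤ ε) {a b : E} (ha : a ∈ s) (hb : b ∈ s) :
    (c - ε) * ‖a - b‖ ≤ ‖g a - g b‖ := by
  have hmv : ‖g a - g b - L (a - b)‖ ≤ ε * ‖a - b‖ :=
    hs.norm_image_sub_le_of_norm_fderiv_le' hg hε hb ha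
  have htri : ‖L (a - b)‖ ≤ ‖g a - g b‖ + ‖g a - g b - L (a - b)‖ := by
    simpa using norm_sub_le (g a - g b) (g a - g b - L (a - b))
  linarith [hL (a - b)]

/-- Treating `ρ` as a variable near `0` lets `IsCompact.eventually_forall_of_forall_eventually`
glue local bounds valid for all small `ρ`. -/
theorem IsCompact.exists_pos_forall_of_forall_eventually {X : Type*} [TopologicalSpace X]
    {K : Set X} (hK : IsCompact K) {Q : ℝ → X → Prop}
    (hQ : ∀ p ∈ K, ∀ᶠ z : ℝ × X in 𝓝 (0, p), Q z.1 z.2) : ∃ ρ > 0, ∀ p ∈ K, Q ρ p :=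
  (((hK.eventually_forall_of_forall_eventually hQ).filter_mono nhdsWithin_le_nhds).and
    (self_mem_nhdsWithin : ∀ᶠ ρ in 𝓝[>] (0 : ℝ), 0 < ρ)).exists.imp fun _ h => ⟨h.2, h.1⟩

theorem eventually_mul_norm_sub_le_of_injective_fderiv {E F P : Type*}
    [NormedAddCommGroup E] [NormedSpace ℝ E] [FiniteDimensional ℝ E] [NormedAddCommGroup F]
    [NormedSpace ℝ F] [TopologicalSpace P] {f : E → P → F}
    (hf : ∀ π, Differentiable ℝ (f · π)) {x₀ : E} {π₀ : P}
    (hf' : ContinuousAt (fun q : E × P => fderiv ℝ (f · q.2) q.1) (x₀, π₀))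
    (hinj : Injective (fderiv ℝ (f · π₀) x₀)) :
    ∀ᶠ z : ℝ × E × E × P in 𝓝 (0, x₀, x₀, π₀),
      z.1 * ‖z.2.1 - z.2.2.1‖ ≤ ‖f z.2.1 z.2.2.2 - f z.2.2.1 z.2.2.2‖ := by
  obtain ⟨c, hc, hL⟩ := ContinuousLinearMap.exists_pos_mul_norm_le_of_injective hinj
  have hclose := Metric.tendsto_nhds.1 hf' (c / 2) (half_pos hc)
  rw [nhds_prod_eq] at hclose
  obtain ⟨pa, hpa, pb, hpb, hpab⟩ := eventually_prod_iff.1 hclose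
  obtain ⟨r, hr, hball⟩ := Metric.eventually_nhds_iff_ball.1 hpa
  filter_upwards [prod_mem_nhds (Iio_mem_nhds (half_pos hc)) (prod_mem_nhds
    (ball_mem_nhds x₀ hr) (prod_mem_nhds (ball_mem_nhds x₀ hr) hpb))]
    with ⟨ρ, ya, yb, π⟩ ⟨hρ, hya, hyb, hπ⟩
  have hε : ∀ z ∈ ball x₀ r, ‖fderiv ℝ (f · π) z - fderiv ℝ (f · π₀) x₀‖ ≤ c / 2 :=
    fun z hz => (dist_eq_norm _ _).symm.trans_le (hpab (hball z hz) hπ).le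
  calc ρ * ‖ya - yb‖ ≤ (c - c / 2) * ‖ya - yb‖ := by
        gcongr
        linarith [mem_Iio.1 hρ]
    _ ≤ ‖f ya π - f yb π‖ := (convex_ball x₀ r).sub_mul_norm_sub_le_of_norm_fderiv_sub_le
        (fun z _ => (hf π).differentiableAt) hL hε hya hyb

theorem eventually_mul_norm_sub_le_of_ne {E F P : Type*} [SeminormedAddCommGroup E]
    [NormedAddCommGroup F] [TopologicalSpace P] {f : E → P → F}
    (hf : Continuous fun q : E × P => f q.1 q.2) {a b : E} {π : P} (hab : f a π ≠ f b π) :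
    ∀ᶠ z : ℝ × E × E × P in 𝓝 (0, a, b, π),
      z.1 * ‖z.2.1 - z.2.2.1‖ ≤ ‖f z.2.1 z.2.2.2 - f z.2.2.1 z.2.2.2‖ := by
  have hcont : Continuous fun z : ℝ × E × E × P => ‖f z.2.1 z.2.2.2 - f z.2.2.1 z.2.2.2‖ :=
    ((hf.comp (by fun_prop : Continuous fun z : ℝ × E × E × P => (z.2.1, z.2.2.2))).sub
      (hf.comp (by fun_prop : Continuous fun z : ℝ × E × E × P => (z.2.2.1, z.2.2.2)))).norm
  refine (ContinuousAt.eventually_lt (by fun_prop) hcont.continuousAt ?_).mono fun _ => le_of_lt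
  simpa [sub_eq_zero] using hab

/-- A parametrized family of injective immersions on a compact set, with compact parameter
space, admits a uniform lower Lipschitz bound. -/
theorem stmt4 (n m : ℕ) (P : Type*) [TopologicalSpace P] [CompactSpace P]
    (𝒦 : Set (EuclideanSpace ℝ (Fin n))) (h𝒦 : IsCompact 𝒦)
    (F : EuclideanSpace ℝ (Fin n) → P → EuclideanSpace ℝ (Fin m))
    (hFcont : Continuous fun q : EuclideanSpace ℝ (Fin n) × P => F q.1 q.2)
    (hC1 : ∀ π : P, ContDiff ℝ 1 (fun x => F x π))
    (hDcont : Continuous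
      (fun q : EuclideanSpace ℝ (Fin n) × P => fderiv ℝ (fun x => F x q.2) q.1))
    (hInjOn : ∀ π : P, Set.InjOn (fun x => F x π) 𝒦)
    (hImm : ∀ π : P, ∀ x ∈ 𝒦, Function.Injective (fderiv ℝ (fun y => F y π) x)) :
    ∃ ρ > 0, ∀ xa ∈ 𝒦, ∀ xb ∈ 𝒦, ∀ π : P,
      ρ * ‖xa - xb‖ ≤ ‖F xa π - F xb π‖ := by
  have hlocal : ∀ p ∈ 𝒦 ×ˢ 𝒦 ×ˢ (univ : Set P), ∀ᶠ z : ℝ × _ in 𝓝 (0, p),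
      z.1 * ‖z.2.1 - z.2.2.1‖ ≤ ‖F z.2.1 z.2.2.2 - F z.2.2.1 z.2.2.2‖ := by
    rintro ⟨a, b, π⟩ ⟨ha, hb, -⟩
    rcases eq_or_ne a b with rfl | hab
    · exact eventually_mul_norm_sub_le_of_injective_fderiv
        (fun π => (hC1 π).differentiable one_ne_zero) hDcont.continuousAt (hImm π a ha)
    · exact eventually_mul_norm_sub_le_of_ne hFcont fun h => hab (hInjOn π ha hb h)
  obtain ⟨ρ, hρ, hbound⟩ :=
    (h𝒦.prod (h𝒦.prod isCompact_univ)).exists_pos_forall_of_forall_eventually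
      (Q := fun ρ p => ρ * ‖p.1 - p.2.1‖ ≤ ‖F p.1 p.2.2 - F p.2.1 p.2.2‖) hlocal
  exact ⟨ρ, hρ, fun xa ha xb hb π => hbound (xa, xb, π) ⟨ha, hb, trivial⟩⟩
end

section
/- Let 𝒦 ⊂ ℝ^n be compact, Π compact, F : ℝ^n × Π → ℝ^m continuous such that there exists ρ > 0 with |F(x_a,π) − F(x_b,π)| ≥ ρ|x_a − x_b| for all x_a, x_b ∈ 𝒦 and π ∈ Π. Then there exists a continuous map F^inv : ℝ^m × Π → ℝ^n, globally Lipschitz in its first variable with constant √n/ρ uniformly in the second variable, such that F^inv(F(x,π), π) = x for all (x,π) ∈ 𝒦 × Π. -/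
/-!
For fixed `π`, each coordinate `x ↦ x i` is `ρ⁻¹`-Lipschitz as a function of `F (x, π)` on `𝒦`,
so the McShane formula `z ↦ inf_{x ∈ 𝒦} (x i + ρ⁻¹ ‖F (x, π) - z‖)` extends it to a
`ρ⁻¹`-Lipschitz function of `z`. Taking the infimum over the compact set `𝒦` of a jointly
continuous expression keeps the result continuous in `(z, π)`, and `n` coordinates that are each
`ρ⁻¹`-Lipschitz give a `√n / ρ`-Lipschitz map into Euclidean space.
-/

open Set
open scoped NNReal ENNReal

theorem LipschitzWith.pi {α ι : Type*} {β : ι → Type*} [Fintype ι] [PseudoEMetricSpace α]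
    [∀ i, PseudoEMetricSpace (β i)] {K : ℝ≥0} {f : α → ∀ i, β i}
    (hf : ∀ i, LipschitzWith K fun a => f a i) : LipschitzWith K f :=
  fun a b => edist_pi_le_iff.2 fun i => hf i a b

section McShane

variable {X E : Type*} [PseudoMetricSpace E]

/-- Indexed by `K` rather than by `e '' K`, so that `e` need not be injective and may depend
continuously on a parameter. -/
noncomputable def mcShaneExtension (K : Set X) (f : X → ℝ) (e : X → E) (L : ℝ≥0) (z : E) : ℝ :=
  sInf ((fun x => f x + L * dist (e x) z) '' K)

variable {K : Set X} {f : X → ℝ} {e : X → E} {L : ℝ≥0}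

theorem bddBelow_mcShaneExtension_image (hf : BddBelow (f '' K)) (z : E) :
    BddBelow ((fun x => f x + L * dist (e x) z) '' K) := by
  obtain ⟨c, hc⟩ := hf
  refine ⟨c, forall_mem_image.2 fun x hx => ?_⟩
  have hcx := hc (mem_image_of_mem f hx)
  have : 0 ≤ (L : ℝ) * dist (e x) z := by positivity
  linarith

theorem mcShaneExtension_le (hf : BddBelow (f '' K)) {x : X} (hx : x ∈ K) (z : E) :
    mcShaneExtension K f e L z ≤ f x + L * dist (e x) z :=
  csInf_le (bddBelow_mcShaneExtension_image hf z) (mem_image_of_mem _ hx)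

theorem lipschitzWith_mcShaneExtension (hf : BddBelow (f '' K)) :
    LipschitzWith L (mcShaneExtension K f e L) := by
  rcases K.eq_empty_or_nonempty with rfl | hK
  · -- `sInf ∅ = 0` in `ℝ`
    convert LipschitzWith.const' (α := E) (K := L) (0 : ℝ) using 1
    funext z
    simp [mcShaneExtension]
  refine LipschitzWith.of_le_add_mul L fun z z' => ?_
  rw [← sub_le_iff_le_add]
  refine le_csInf (hK.image _) (forall_mem_image.2 fun x hx => ?_)
  rw [sub_le_iff_le_add]
  calc mcShaneExtension K f e L z ≤ f x + L * dist (e x) z := mcShaneExtension_le hf hx z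
    _ ≤ f x + L * dist (e x) z' + L * dist z z' := by
      rw [add_assoc, ← mul_add]
      gcongr
      exact dist_triangle_right _ _ _

theorem mcShaneExtension_apply_of_mem (hf : BddBelow (f '' K))
    (hfe : ∀ x ∈ K, ∀ y ∈ K, f y ≤ f x + L * dist (e x) (e y)) {y : X} (hy : y ∈ K) :
    mcShaneExtension K f e L (e y) = f y := by
  refine le_antisymm ?_ (le_csInf ⟨_, mem_image_of_mem _ hy⟩
    (forall_mem_image.2 fun x hx => hfe x hx y hy))
  simpa using mcShaneExtension_le (e := e) (L := L) hf hy (e y)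

theorem continuous_mcShaneExtension [TopologicalSpace X] {P : Type*} [TopologicalSpace P]
    (hK : IsCompact K) (hf : Continuous f) {e : P → X → E} (he : Continuous ↿e) :
    Continuous fun q : E × P => mcShaneExtension K f (e q.2) L q.1 :=
  hK.continuous_sInf (f := fun (q : E × P) x => f x + L * dist (e q.2 x) q.1) (by fun_prop)

end McShane

theorem stmt5_general (n m : ℕ) (P : Type*) [TopologicalSpace P]
    (𝒦 : Set (EuclideanSpace ℝ (Fin n))) (h𝒦 : IsCompact 𝒦)
    (F : EuclideanSpace ℝ (Fin n) × P → EuclideanSpace ℝ (Fin m)) (hF : Continuous F)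
    (ρ : ℝ) (hρ : 0 < ρ)
    (hlow : ∀ xa ∈ 𝒦, ∀ xb ∈ 𝒦, ∀ π : P, ρ * ‖xa - xb‖ ≤ ‖F (xa, π) - F (xb, π)‖) :
    ∃ Finv : EuclideanSpace ℝ (Fin m) × P → EuclideanSpace ℝ (Fin n),
      Continuous Finv ∧
      (∀ π : P, LipschitzWith (Real.toNNReal (Real.sqrt n / ρ)) (fun z => Finv (z, π))) ∧
      ∀ x ∈ 𝒦, ∀ π : P, Finv (F (x, π), π) = x := by
  set L := Real.toNNReal ρ⁻¹
  have hL_coe : (L : ℝ) = ρ⁻¹ := Real.coe_toNNReal _ (inv_nonneg.2 hρ.le)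
  have hbdd (i : Fin n) : BddBelow ((fun x : EuclideanSpace ℝ (Fin n) => x i) '' 𝒦) :=
    (h𝒦.image (PiLp.continuous_apply 2 _ i)).bddBelow
  have hcoord (i : Fin n) (π : P) (x) (hx : x ∈ 𝒦) (y) (hy : y ∈ 𝒦) :
      y i ≤ x i + L * dist (F (x, π)) (F (y, π)) := by
    have h₁ : y i - x i ≤ ‖y - x‖ := (le_abs_self _).trans (PiLp.norm_apply_le (y - x) i)
    have h₂ : ‖y - x‖ ≤ ρ⁻¹ * dist (F (x, π)) (F (y, π)) := by
      rw [dist_comm, dist_eq_norm, inv_mul_eq_div, le_div_iff₀' hρ]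
      exact hlow y hy x hx π
    rw [hL_coe]
    linarith
  have hconst :
      Real.toNNReal (√n / ρ) = (Fintype.card (Fin n) : ℝ≥0) ^ (1 / (2 : ℝ≥0∞)).toReal * L := by
    ext
    simp [hL_coe, Real.sqrt_eq_rpow, div_eq_mul_inv]
    positivity
  refine ⟨fun q => WithLp.toLp 2 fun i => mcShaneExtension 𝒦 (· i) (fun x => F (x, q.2)) L q.1,
    ?_, fun π => ?_, fun x hx π => ?_⟩
  · exact (PiLp.continuous_toLp 2 _).comp <| continuous_pi fun i =>
      continuous_mcShaneExtension h𝒦 (PiLp.continuous_apply 2 _ i) (e := fun π x => F (x, π))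
        (by fun_prop)
  · rw [hconst]
    exact (PiLp.lipschitzWith_toLp 2 (fun _ : Fin n => ℝ)).comp <| LipschitzWith.pi fun i =>
      lipschitzWith_mcShaneExtension (e := fun x => F (x, π)) (L := L) (hbdd i)
  · ext i
    exact mcShaneExtension_apply_of_mem (e := fun x => F (x, π)) (L := L) (hbdd i) (hcoord i π) hx

/-- Parametric Lipschitz left-inverse extension: a family of maps with a uniform lower
Lipschitz bound on a compact set admits a continuous global left inverse, Lipschitz with
constant `√n/ρ` in the first variable uniformly in the parameter. -/
theorem stmt5 (n m : ℕ) (P : Type*) [TopologicalSpace P] [CompactSpace P]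
    (𝒦 : Set (EuclideanSpace ℝ (Fin n))) (h𝒦 : IsCompact 𝒦)
    (F : EuclideanSpace ℝ (Fin n) × P → EuclideanSpace ℝ (Fin m)) (hF : Continuous F)
    (ρ : ℝ) (hρ : 0 < ρ)
    (hlow : ∀ xa ∈ 𝒦, ∀ xb ∈ 𝒦, ∀ π : P, ρ * ‖xa - xb‖ ≤ ‖F (xa, π) - F (xb, π)‖) :
    ∃ Finv : EuclideanSpace ℝ (Fin m) × P → EuclideanSpace ℝ (Fin n),
      Continuous Finv ∧
      (∀ π : P, LipschitzWith (Real.toNNReal (Real.sqrt n / ρ)) (fun z => Finv (z, π))) ∧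
      ∀ x ∈ 𝒦, ∀ π : P, Finv (F (x, π), π) = x :=
  stmt5_general n m P 𝒦 h𝒦 F hF ρ hρ hlow
end

section
/- (Geometric-sum estimate for sampled error accumulation.) Let a > 0, b > 0, Δ > 0, s₀ ∈ [0, Δ], and define τ_j = Δ − s₀ + jΔ for j ∈ ℕ. For t > 0 and i ∈ ℕ with τ_i < t ≤ τ_{i+1}, let S = Σ_{j=0}^{i−1} e^{−a(t−τ_{j+1})} e^{−bτ_j}. Then: if a > b, S ≤ e^{−bt} e^{2Δ(a+b)} / (e^{Δ(a−b)} − 1); if a < b, S ≤ e^{−at} e^{2Δa} / (1 − e^{Δ(a−b)}); and if a = b, S ≤ (t/Δ) e^{−at} e^{2Δa}. -/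
/-!
Since the sampling times form an arithmetic progression `τ j = τ 0 + j Δ`, the `j`-th summand is
`exp (-a t + (a - b) τ 0 + a Δ) * r ^ j` with `r = exp ((a - b) Δ)`, so `S` is a geometric sum.
For `a > b` it is at most `exp (-a t + (a - b) τ i + a Δ) / (r - 1)`, and `τ i ≤ t` turns
`-a t + (a - b) τ i` into `-b t`; for `a < b` it is at most the sum of the whole series; for
`a = b` all `i` terms are equal and `i Δ ≤ τ i < t`.
-/

open Finset Real

theorem geom_sum_le_pow_div_sub_one {K : Type*} [Field K] [LinearOrder K] [IsStrictOrderedRing K]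
    {r : K} (hr : 1 < r) (n : ℕ) : ∑ j ∈ range n, r ^ j ≤ r ^ n / (r - 1) := by
  rw [geom_sum_eq hr.ne']
  exact div_le_div_of_nonneg_right (sub_le_self _ zero_le_one) (sub_pos.2 hr).le

theorem geom_sum_le_inv_one_sub {K : Type*} [Field K] [LinearOrder K] [IsStrictOrderedRing K]
    {r : K} (hr₀ : 0 ≤ r) (hr₁ : r < 1) (n : ℕ) : ∑ j ∈ range n, r ^ j ≤ 1 / (1 - r) := by
  have h := geom_sum_Ico_le_of_lt_one (m := 0) (n := n) hr₀ hr₁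
  rwa [pow_zero, ← range_eq_Ico] at h

namespace SampledErrorSum

variable {a b Δ t : ℝ} {τ : ℕ → ℝ}

theorem sum_eq_mul_geom_sum (hτ : ∀ j : ℕ, τ j = τ 0 + j * Δ) (i : ℕ) :
    ∑ j ∈ range i, exp (-a * (t - τ (j + 1))) * exp (-b * τ j)
      = exp (-a * t + (a - b) * τ 0 + a * Δ) * ∑ j ∈ range i, exp ((a - b) * Δ) ^ j := by
  rw [mul_sum]
  refine sum_congr rfl fun j _ => ?_
  rw [hτ (j + 1), hτ j, ← exp_add, ← exp_nat_mul, ← exp_add]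
  congr 1
  push_cast
  ring

theorem sum_le_of_b_lt_a (hτ : ∀ j : ℕ, τ j = τ 0 + j * Δ) (hΔ : 0 < Δ) (hab : b < a)
    {i : ℕ} (hti : τ i ≤ t) :
    ∑ j ∈ range i, exp (-a * (t - τ (j + 1))) * exp (-b * τ j)
      ≤ exp (-b * t + a * Δ) / (exp (Δ * (a - b)) - 1) := by
  have hr : 1 < exp ((a - b) * Δ) := one_lt_exp_iff.2 (mul_pos (sub_pos.2 hab) hΔ)
  calc _ = exp (-a * t + (a - b) * τ 0 + a * Δ) * ∑ j ∈ range i, exp ((a - b) * Δ) ^ j :=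
        sum_eq_mul_geom_sum hτ i
    _ ≤ exp (-a * t + (a - b) * τ 0 + a * Δ) * (exp ((a - b) * Δ) ^ i / (exp ((a - b) * Δ) - 1)) :=
        mul_le_mul_of_nonneg_left (geom_sum_le_pow_div_sub_one hr i) (exp_pos _).le
    _ = exp (-a * t + (a - b) * τ i + a * Δ) / (exp (Δ * (a - b)) - 1) := by
        rw [hτ i, mul_comm Δ, ← exp_nat_mul, mul_div_assoc', ← exp_add]
        ring_nf
    _ ≤ exp (-b * t + a * Δ) / (exp (Δ * (a - b)) - 1) := by
        rw [mul_comm Δ]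
        exact div_le_div_of_nonneg_right (exp_le_exp.2 (by nlinarith)) (sub_pos.2 hr).le

theorem sum_le_of_a_lt_b (hτ : ∀ j : ℕ, τ j = τ 0 + j * Δ) (hΔ : 0 < Δ) (hτ₀ : 0 ≤ τ 0)
    (hab : a < b) (i : ℕ) :
    ∑ j ∈ range i, exp (-a * (t - τ (j + 1))) * exp (-b * τ j)
      ≤ exp (-a * t + a * Δ) / (1 - exp (Δ * (a - b))) := by
  have hr : exp ((a - b) * Δ) < 1 := exp_lt_one_iff.2 (mul_neg_of_neg_of_pos (sub_neg.2 hab) hΔ)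
  calc _ = exp (-a * t + (a - b) * τ 0 + a * Δ) * ∑ j ∈ range i, exp ((a - b) * Δ) ^ j :=
        sum_eq_mul_geom_sum hτ i
    _ ≤ exp (-a * t + (a - b) * τ 0 + a * Δ) * (1 / (1 - exp ((a - b) * Δ))) :=
        mul_le_mul_of_nonneg_left (geom_sum_le_inv_one_sub (exp_pos _).le hr i) (exp_pos _).le
    _ ≤ exp (-a * t + a * Δ) / (1 - exp (Δ * (a - b))) := by
        rw [mul_one_div, mul_comm Δ]
        exact div_le_div_of_nonneg_right (exp_le_exp.2 (by nlinarith)) (sub_pos.2 hr).le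

theorem sum_eq_of_a_eq_b (hτ : ∀ j : ℕ, τ j = τ 0 + j * Δ) (i : ℕ) :
    ∑ j ∈ range i, exp (-a * (t - τ (j + 1))) * exp (-a * τ j) = i * exp (-a * t + a * Δ) := by
  rw [sum_eq_mul_geom_sum hτ]
  simp [mul_comm]

end SampledErrorSum

open SampledErrorSum in
theorem stmt17_general (a b Δ s₀ : ℝ) (ha : 0 < a) (hb : 0 < b) (hΔ : 0 < Δ)
    (hs₀ : s₀ ∈ Set.Icc 0 Δ)
    (τ : ℕ → ℝ) (hτ : ∀ j : ℕ, τ j = Δ - s₀ + j * Δ)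
    (t : ℝ) (i : ℕ) (hti : τ i < t) :
    (a > b →
      ∑ j ∈ Finset.range i, Real.exp (-a * (t - τ (j + 1))) * Real.exp (-b * τ j)
        ≤ Real.exp (-b * t) * Real.exp (2 * Δ * (a + b)) / (Real.exp (Δ * (a - b)) - 1)) ∧
    (a < b →
      ∑ j ∈ Finset.range i, Real.exp (-a * (t - τ (j + 1))) * Real.exp (-b * τ j)
        ≤ Real.exp (-a * t) * Real.exp (2 * Δ * a) / (1 - Real.exp (Δ * (a - b)))) ∧
    (a = b →
      ∑ j ∈ Finset.range i, Real.exp (-a * (t - τ (j + 1))) * Real.exp (-b * τ j)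
        ≤ (t / Δ) * Real.exp (-a * t) * Real.exp (2 * Δ * a)) := by
  have hτ₀ : 0 ≤ τ 0 := by simpa [hτ 0] using hs₀.2
  have hτ' : ∀ j : ℕ, τ j = τ 0 + j * Δ := fun j => by simp [hτ]
  refine ⟨fun hab => (sum_le_of_b_lt_a hτ' hΔ hab hti.le).trans ?_,
    fun hab => (sum_le_of_a_lt_b hτ' hΔ hτ₀ hab i).trans ?_, fun hab => ?_⟩
  · have hr : 0 ≤ exp (Δ * (a - b)) - 1 :=
      sub_nonneg.2 (one_le_exp (mul_nonneg hΔ.le (sub_nonneg.2 hab.le)))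
    rw [← exp_add]
    exact div_le_div_of_nonneg_right (exp_le_exp.2 (by nlinarith)) hr
  · have hr : 0 ≤ 1 - exp (Δ * (a - b)) :=
      sub_nonneg.2 (exp_le_one_iff.2 (mul_nonpos_of_nonneg_of_nonpos hΔ.le (sub_nonpos.2 hab.le)))
    rw [← exp_add]
    exact div_le_div_of_nonneg_right (exp_le_exp.2 (by nlinarith)) hr
  · subst hab
    have hi : (i : ℝ) ≤ t / Δ := (le_div_iff₀ hΔ).2 (by linarith [hτ' i])
    rw [sum_eq_of_a_eq_b hτ', mul_assoc, ← exp_add]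
    exact mul_le_mul hi (exp_le_exp.2 (by nlinarith)) (exp_pos _).le (hi.trans' i.cast_nonneg)

/-- Geometric-sum estimate for sampled error accumulation. -/
theorem stmt17 (a b Δ s₀ : ℝ) (ha : 0 < a) (hb : 0 < b) (hΔ : 0 < Δ)
    (hs₀ : s₀ ∈ Set.Icc 0 Δ)
    (τ : ℕ → ℝ) (hτ : ∀ j : ℕ, τ j = Δ - s₀ + j * Δ)
    (t : ℝ) (i : ℕ) (hti : τ i < t) (hti' : t ≤ τ (i + 1)) :
    (a > b →
      ∑ j ∈ Finset.range i, Real.exp (-a * (t - τ (j + 1))) * Real.exp (-b * τ j)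
        ≤ Real.exp (-b * t) * Real.exp (2 * Δ * (a + b)) / (Real.exp (Δ * (a - b)) - 1)) ∧
    (a < b →
      ∑ j ∈ Finset.range i, Real.exp (-a * (t - τ (j + 1))) * Real.exp (-b * τ j)
        ≤ Real.exp (-a * t) * Real.exp (2 * Δ * a) / (1 - Real.exp (Δ * (a - b)))) ∧
    (a = b →
      ∑ j ∈ Finset.range i, Real.exp (-a * (t - τ (j + 1))) * Real.exp (-b * τ j)
        ≤ (t / Δ) * Real.exp (-a * t) * Real.exp (2 * Δ * a)) :=
  stmt17_general a b Δ s₀ ha hb hΔ hs₀ τ hτ t i hti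
end
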